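/- Let A be positive semidefinite and T an operator admitting an A-adjoint T^♯. Then dw_A(T)² ≥ max{ w_A(T)² + c_A(T^♯T)², ‖T‖_A⁴ + c_A(T)² }, where c_A(S) = inf{|⟨Sx,x⟩_A| : ‖x‖_A = 1}. -/

import Mathlib

/-!
For an `A`-unit vector `x`, `|⟨Tx,x⟩_A|² + ‖Tx‖_A⁴ ≤ dw_A(T)²`, while `c_A(T) ≤ |⟨Tx,x⟩_A|` and
`c_A(T^♯T) ≤ |⟨T^♯Tx,x⟩_A| = ‖Tx‖_A²`; taking the supremum over `x` gives both bounds.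

The real work is that the supremum defining `dw_A(T)` is finite (in Lean `sSup` of an unbounded
set of reals is `0`). This holds because `S = T^♯T` is `A`-selfadjoint, so that
`‖Tx‖_A² ≤ ‖Sx‖_A` and `‖Sx‖_A ^ 2 ^ n ≤ ‖S ^ 2 ^ n x‖_A ≤ √‖A‖ ‖x‖ ‖S‖ ^ 2 ^ n` for all `n`,
which forces `‖Sx‖_A ≤ ‖S‖` on the `A`-unit sphere.
-/

noncomputable section

namespace DW

variable {H : Type*} [NormedAddCommGroup H] [InnerProductSpace ℂ H]

/-- The semi-inner product induced by `A`: `⟨x,y⟩_A = ⟨Ax, y⟩`. -/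
def innA (A : H →L[ℂ] H) (x y : H) : ℂ := inner ℂ (A x) y

/-- The seminorm induced by `A`. -/
def normA (A : H →L[ℂ] H) (x : H) : ℝ := Real.sqrt (innA A x x).re

/-- `T` is `A`-bounded. -/
def IsABounded (A T : H →L[ℂ] H) : Prop := ∃ c > 0, ∀ x, normA A (T x) ≤ c * normA A x

/-- `S` is an `A`-adjoint of `T`. -/
def IsAAdjointPair (A T S : H →L[ℂ] H) : Prop := ∀ x y, innA A (T x) y = innA A x (S y)

/-- The `A`-operator seminorm. -/
def opNormA (A T : H →L[ℂ] H) : ℝ := sSup {r | ∃ x, normA A x = 1 ∧ r = normA A (T x)}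

/-- The `A`-minimum modulus. -/
def mA (A T : H →L[ℂ] H) : ℝ := sInf {r | ∃ x, normA A x = 1 ∧ r = normA A (T x)}

/-- The `A`-numerical radius. -/
def wA (A T : H →L[ℂ] H) : ℝ :=
  sSup {r | ∃ x, normA A x = 1 ∧ r = ‖innA A (T x) x‖}

/-- The `A`-Crawford number. -/
def cA (A T : H →L[ℂ] H) : ℝ :=
  sInf {r | ∃ x, normA A x = 1 ∧ r = ‖innA A (T x) x‖}

/-- The `A`-Davis-Wielandt radius. -/
def dwA (A T : H →L[ℂ] H) : ℝ :=
  sSup {r | ∃ x, normA A x = 1 ∧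
    r = Real.sqrt (‖innA A (T x) x‖ ^ 2 + normA A (T x) ^ 4)}

/-- The semi-inner product on `H ⊕ H` induced by `𝔸 = diag(A,A)`. -/
def innA2 (A : H →L[ℂ] H) (z w : H × H) : ℂ := innA A z.1 w.1 + innA A z.2 w.2

/-- The seminorm on `H ⊕ H` induced by `𝔸 = diag(A,A)`. -/
def normA2 (A : H →L[ℂ] H) (z : H × H) : ℝ := Real.sqrt (innA2 A z z).re

/-- The `𝔸`-numerical radius on `H ⊕ H`, `𝔸 = diag(A,A)`. -/
def wA2 (A : H →L[ℂ] H) (T : H × H →L[ℂ] H × H) : ℝ :=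
  sSup {r | ∃ z, normA2 A z = 1 ∧ r = ‖innA2 A (T z) z‖}

/-- The `𝔸`-Davis-Wielandt radius on `H ⊕ H`, `𝔸 = diag(A,A)`. -/
def dwA2 (A : H →L[ℂ] H) (T : H × H →L[ℂ] H × H) : ℝ :=
  sSup {r | ∃ z, normA2 A z = 1 ∧
    r = Real.sqrt (‖innA2 A (T z) z‖ ^ 2 + normA2 A (T z) ^ 4)}

/-- The block operator `[[0, X], [Y, 0]]` on `H ⊕ H`. -/
def offDiag (X Y : H →L[ℂ] H) : H × H →L[ℂ] H × H :=
  (X.comp (ContinuousLinearMap.snd ℂ H H)).prod (Y.comp (ContinuousLinearMap.fst ℂ H H))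

end DW

open DW

variable {H : Type*} [NormedAddCommGroup H] [InnerProductSpace ℂ H] [CompleteSpace H]

namespace DW

open Filter Topology

lemma le_of_forall_pow_le_mul_pow {a b C : ℝ} (hb : 0 ≤ b) {k : ℕ → ℕ}
    (hk : Tendsto k atTop atTop) (h : ∀ n, a ^ k n ≤ C * b ^ k n) : a ≤ b := by
  by_contra! hba
  have ha : 0 < a := hb.trans_lt hba
  have hlim : Tendsto (fun n => C * (b / a) ^ k n) atTop (𝓝 0) := by
    simpa using ((tendsto_pow_atTop_nhds_zero_of_lt_one (div_nonneg hb ha.le)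
      ((div_lt_one ha).2 hba)).comp hk).const_mul C
  obtain ⟨n, hn⟩ := (hlim.eventually_lt_const one_pos).exists
  have hpow : 0 < a ^ k n := pow_pos ha _
  have : C * b ^ k n < a ^ k n := by
    rwa [div_pow, mul_div_assoc', div_lt_one hpow] at hn
  exact (h n).not_gt this

lemma sSup_pow_le {ι : Type*} {p : ι → Prop} {f : ι → ℝ} {n : ℕ} (hn : n ≠ 0)
    (hp : ∃ i, p i) (hf : ∀ i, 0 ≤ f i) {y : ℝ} (hy : ∀ i, p i → f i ^ n ≤ y) :
    sSup {r | ∃ i, p i ∧ r = f i} ^ n ≤ y := by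
  obtain ⟨i₀, hi₀⟩ := hp
  have hy0 : 0 ≤ y := (pow_nonneg (hf i₀) n).trans (hy i₀ hi₀)
  have hroot : sSup {r | ∃ i, p i ∧ r = f i} ≤ y ^ (n⁻¹ : ℝ) := by
    refine csSup_le ⟨_, i₀, hi₀, rfl⟩ ?_
    rintro _ ⟨i, hi, rfl⟩
    refine le_of_pow_le_pow_left₀ hn (by positivity) ?_
    rw [Real.rpow_inv_natCast_pow hy0 hn]
    exact hy i hi
  have hsup0 : 0 ≤ sSup {r | ∃ i, p i ∧ r = f i} := by
    refine Real.sSup_nonneg ?_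
    rintro _ ⟨i, -, rfl⟩
    exact hf i
  calc sSup {r | ∃ i, p i ∧ r = f i} ^ n ≤ (y ^ (n⁻¹ : ℝ)) ^ n := pow_le_pow_left₀ hsup0 hroot n
    _ = y := Real.rpow_inv_natCast_pow hy0 hn

section SemiInner

variable {E : Type*} [NormedAddCommGroup E] [InnerProductSpace ℂ E] {A : E →L[ℂ] E}

lemma conj_innA (hA : A.IsPositive) (x y : E) : starRingEnd ℂ (innA A y x) = innA A x y := by
  rw [innA, innA, inner_conj_symm, hA.inner_left_eq_inner_right]

lemma re_innA_self_nonneg (hA : A.IsPositive) (x : E) : 0 ≤ (innA A x x).re :=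
  hA.re_inner_nonneg_left x

lemma normA_nonneg (A : E →L[ℂ] E) (x : E) : 0 ≤ normA A x := Real.sqrt_nonneg _

lemma normA_sq (hA : A.IsPositive) (x : E) : normA A x ^ 2 = (innA A x x).re :=
  Real.sq_sqrt (re_innA_self_nonneg hA x)

/-- `⟨·,·⟩_A` as a semi-inner product, to borrow the Cauchy–Schwarz inequality. -/
abbrev preInnerProductCore (hA : A.IsPositive) : PreInnerProductSpace.Core ℂ E where
  inner := innA A
  conj_inner_symm := conj_innA hA
  re_inner_nonneg := re_innA_self_nonneg hA
  add_left x y z := by simp only [innA, map_add, inner_add_left]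
  smul_left x y r := by simp only [innA, map_smul, inner_smul_left]

lemma norm_innA_le (hA : A.IsPositive) (x y : E) : ‖innA A x y‖ ≤ normA A x * normA A y :=
  @InnerProductSpace.Core.norm_inner_le_norm ℂ E _ _ _ (preInnerProductCore hA) x y

lemma norm_innA_self (hA : A.IsPositive) (x : E) : ‖innA A x x‖ = normA A x ^ 2 := by
  have hreal : ((innA A x x).re : ℂ) = innA A x x :=
    Complex.conj_eq_iff_re.mp (conj_innA hA x x)
  rw [← hreal, Complex.norm_of_nonneg (re_innA_self_nonneg hA x), normA_sq hA]

lemma normA_le (A : E →L[ℂ] E) (x : E) : normA A x ≤ √‖A‖ * ‖x‖ := by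
  have hre : (innA A x x).re ≤ ‖A‖ * ‖x‖ ^ 2 :=
    calc (innA A x x).re ≤ ‖A x‖ * ‖x‖ := (Complex.re_le_norm _).trans (norm_inner_le_norm _ _)
      _ ≤ ‖A‖ * ‖x‖ * ‖x‖ := by gcongr; exact A.le_opNorm x
      _ = ‖A‖ * ‖x‖ ^ 2 := by ring
  calc normA A x ≤ √(‖A‖ * ‖x‖ ^ 2) := Real.sqrt_le_sqrt hre
    _ = √‖A‖ * ‖x‖ := by rw [Real.sqrt_mul (norm_nonneg A), Real.sqrt_sq (norm_nonneg x)]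

end SemiInner

namespace IsAAdjointPair

variable {E : Type*} [NormedAddCommGroup E] [InnerProductSpace ℂ E] {A T T' U U' : E →L[ℂ] E}

lemma symm (hA : A.IsPositive) (h : IsAAdjointPair A T T') : IsAAdjointPair A T' T := by
  intro x y
  rw [← conj_innA hA, ← h, conj_innA hA]

lemma comp (h : IsAAdjointPair A T T') (hU : IsAAdjointPair A U U') :
    IsAAdjointPair A (U.comp T) (T'.comp U') := by
  intro x y
  simp only [ContinuousLinearMap.comp_apply, hU _ y, h x]

lemma pow {S : E →L[ℂ] E} (h : IsAAdjointPair A S S) (n : ℕ) :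
    IsAAdjointPair A (S ^ n) (S ^ n) := by
  induction n with
  | zero => exact fun x y => rfl
  | succ n ih =>
    have := h.comp ih
    rwa [← ContinuousLinearMap.mul_def, ← ContinuousLinearMap.mul_def, ← pow_succ,
      ← pow_succ'] at this

lemma normA_apply_sq_le (hA : A.IsPositive) (h : IsAAdjointPair A T T') (x : E) :
    normA A (T x) ^ 2 ≤ normA A x * normA A (T' (T x)) :=
  calc normA A (T x) ^ 2 = (innA A x (T' (T x))).re := by rw [normA_sq hA, h]
    _ ≤ normA A x * normA A (T' (T x)) := (Complex.re_le_norm _).trans (norm_innA_le hA _ _)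

/- As in the proof of the spectral radius formula: `‖S x‖_A ^ 2 ^ n ≤ ‖S ^ 2 ^ n x‖_A` by
repeated Cauchy–Schwarz, while the right side grows at most like `‖S‖ ^ 2 ^ n`. -/
lemma normA_apply_le_norm (hA : A.IsPositive) {S : E →L[ℂ] E} (h : IsAAdjointPair A S S) {x : E}
    (hx : normA A x = 1) : normA A (S x) ≤ ‖S‖ := by
  have hiter : ∀ n : ℕ, normA A (S x) ^ 2 ^ n ≤ normA A ((S ^ 2 ^ n) x) := by
    intro n
    induction n with
    | zero => simp
    | succ n ih =>
      calc normA A (S x) ^ 2 ^ (n + 1) = (normA A (S x) ^ 2 ^ n) ^ 2 := by rw [pow_succ, pow_mul]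
        _ ≤ normA A ((S ^ 2 ^ n) x) ^ 2 := pow_le_pow_left₀ (pow_nonneg (normA_nonneg A _) _) ih 2
        _ ≤ normA A x * normA A ((S ^ 2 ^ n) ((S ^ 2 ^ n) x)) := (h.pow _).normA_apply_sq_le hA x
        _ = normA A ((S ^ 2 ^ (n + 1)) x) := by
          rw [hx, one_mul, pow_succ, mul_two, pow_add, mul_apply_eq_comp]
  have hgrowth : ∀ n : ℕ, normA A ((S ^ 2 ^ n) x) ≤ (√‖A‖ * ‖x‖) * ‖S‖ ^ 2 ^ n := by
    intro n
    calc normA A ((S ^ 2 ^ n) x) ≤ √‖A‖ * ‖(S ^ 2 ^ n) x‖ := normA_le A _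
      _ ≤ √‖A‖ * (‖S‖ ^ 2 ^ n * ‖x‖) := by
        gcongr
        exact ((S ^ 2 ^ n).le_opNorm x).trans
          (by gcongr; exact norm_pow_le' S (by positivity))
      _ = (√‖A‖ * ‖x‖) * ‖S‖ ^ 2 ^ n := by ring
  exact le_of_forall_pow_le_mul_pow (norm_nonneg S)
    (tendsto_pow_atTop_atTop_of_one_lt one_lt_two) fun n => (hiter n).trans (hgrowth n)

lemma normA_apply_sq_le_norm_comp (hA : A.IsPositive) (h : IsAAdjointPair A T T') {x : E}
    (hx : normA A x = 1) : normA A (T x) ^ 2 ≤ ‖T'.comp T‖ := by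
  have hS : IsAAdjointPair A (T'.comp T) (T'.comp T) := h.comp (h.symm hA)
  calc normA A (T x) ^ 2 ≤ normA A x * normA A (T' (T x)) := h.normA_apply_sq_le hA x
    _ ≤ ‖T'.comp T‖ := by rw [hx, one_mul]; exact hS.normA_apply_le_norm hA hx

lemma norm_innA_comp_self (hA : A.IsPositive) (h : IsAAdjointPair A T T') (x : E) :
    ‖innA A ((T'.comp T) x) x‖ = normA A (T x) ^ 2 := by
  rw [ContinuousLinearMap.comp_apply, (h.symm hA) (T x) x, norm_innA_self hA]

end IsAAdjointPair

section Radii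

variable {E : Type*} [NormedAddCommGroup E] [InnerProductSpace ℂ E] {A T T' : E →L[ℂ] E}

lemma cA_nonneg (A T : E →L[ℂ] E) : 0 ≤ cA A T := by
  refine Real.sInf_nonneg ?_
  rintro _ ⟨x, -, rfl⟩
  exact norm_nonneg _

lemma cA_le {x : E} (hx : normA A x = 1) : cA A T ≤ ‖innA A (T x) x‖ :=
  csInf_le ⟨0, by rintro _ ⟨y, -, rfl⟩; exact norm_nonneg _⟩ ⟨x, hx, rfl⟩

lemma IsAAdjointPair.bddAbove_dwA_set (hA : A.IsPositive) (h : IsAAdjointPair A T T') :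
    BddAbove {r | ∃ x, normA A x = 1 ∧ r = √(‖innA A (T x) x‖ ^ 2 + normA A (T x) ^ 4)} := by
  refine ⟨√(‖T'.comp T‖ + ‖T'.comp T‖ ^ 2), ?_⟩
  rintro _ ⟨x, hx, rfl⟩
  have hTx := h.normA_apply_sq_le_norm_comp hA hx
  have hinner : ‖innA A (T x) x‖ ≤ normA A (T x) := by
    simpa [hx] using norm_innA_le hA (T x) x
  have hinner_sq := pow_le_pow_left₀ (norm_nonneg _) hinner 2
  have hTx_sq := pow_le_pow_left₀ (sq_nonneg _) hTx 2
  refine Real.sqrt_le_sqrt ?_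
  linarith [show normA A (T x) ^ 4 = (normA A (T x) ^ 2) ^ 2 by ring]

lemma IsAAdjointPair.le_dwA_sq (hA : A.IsPositive) (h : IsAAdjointPair A T T') {x : E}
    (hx : normA A x = 1) : ‖innA A (T x) x‖ ^ 2 + normA A (T x) ^ 4 ≤ dwA A T ^ 2 :=
  (Real.sqrt_le_iff.mp (le_csSup (h.bddAbove_dwA_set hA) ⟨x, hx, rfl⟩)).2

lemma IsAAdjointPair.cA_comp_le (hA : A.IsPositive) (h : IsAAdjointPair A T T') {x : E}
    (hx : normA A x = 1) : cA A (T'.comp T) ≤ normA A (T x) ^ 2 :=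
  h.norm_innA_comp_self hA x ▸ cA_le hx

end Radii

end DW

open DW

theorem stmt4 (A T T' : H →L[ℂ] H) (hA : A.IsPositive) (hT' : IsAAdjointPair A T T') :
    max (wA A T ^ 2 + cA A (T'.comp T) ^ 2) (opNormA A T ^ 4 + cA A T ^ 2)
      ≤ dwA A T ^ 2 := by
  by_cases hsphere : ∃ x, normA A x = 1
  · refine max_le (le_sub_iff_add_le.mp ?_) (le_sub_iff_add_le.mp ?_)
    · refine sSup_pow_le two_ne_zero hsphere (fun _ => norm_nonneg _) fun x hx => ?_
      have hc := pow_le_pow_left₀ (cA_nonneg _ _) (hT'.cA_comp_le hA hx) 2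
      linarith [hT'.le_dwA_sq hA hx, show normA A (T x) ^ 4 = (normA A (T x) ^ 2) ^ 2 by ring]
    · refine sSup_pow_le four_ne_zero hsphere (fun _ => normA_nonneg _ _) fun x hx => ?_
      have hc := pow_le_pow_left₀ (cA_nonneg _ _) (cA_le (T := T) hx) 2
      linarith [hT'.le_dwA_sq hA hx]
  · have hempty : ∀ f : H → ℝ, {r | ∃ x, normA A x = 1 ∧ r = f x} = ∅ := fun f =>
      Set.eq_empty_of_forall_notMem fun _ ⟨x, hx, _⟩ => hsphere ⟨x, hx⟩
    simp [wA, cA, opNormA, dwA, hempty]
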